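/- Multi-ion discrete energy identity: for solutions of the multi-ion scheme with -Δ_h φ^m = ∑_i z_i c_i^m at both time levels, zero-Neumann ghost-cell conditions, and c_i^m ≥ 0, the energy E^m = ½‖∇_h φ^m‖_h² satisfies (E^{m+1}−E^m)/Δt = −‖∑_i z_i (c_i^m + c_i^{m+1})/2‖_h² − ‖√(∑_i z_i² c_{iL}^m) ∂_x^h φ^{m+1/2}‖_h² − ‖√(∑_i z_i² c_{iR}^m) ∂_y^h φ^{m+1/2}‖_h² ≤ 0. -/
import Mathlib


open Finset

noncomputable section

/-- 5-point discrete Laplacian. -/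
def dlap (dx dy : ℝ) (u : ℕ → ℕ → ℝ) (j k : ℕ) : ℝ :=
  (u (j+1) k - 2 * u j k + u (j-1) k) / dx^2 +
  (u j (k+1) - 2 * u j k + u j (k-1)) / dy^2

/-- δ_x(w δ_x u) with interface averages. -/
def ddriftx (dx : ℝ) (w u : ℕ → ℕ → ℝ) (j k : ℕ) : ℝ :=
  ((w j k + w (j+1) k)/2 * (u (j+1) k - u j k)
    - (w (j-1) k + w j k)/2 * (u j k - u (j-1) k)) / dx^2

/-- δ_y(w δ_y u) with interface averages. -/
def ddrifty (dy : ℝ) (w u : ℕ → ℕ → ℝ) (j k : ℕ) : ℝ :=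
  ((w j k + w j (k+1))/2 * (u j (k+1) - u j k)
    - (w j (k-1) + w j k)/2 * (u j k - u j (k-1))) / dy^2

/-- Zero-Neumann (reflection) ghost-cell conditions. -/
def Ghost (Nx Ny : ℕ) (f : ℕ → ℕ → ℝ) : Prop :=
  (∀ k, f 0 k = f 1 k) ∧ (∀ k, f (Nx+1) k = f Nx k) ∧
  (∀ j, f j 0 = f j 1) ∧ (∀ j, f j (Ny+1) = f j Ny)

/-- Discrete L² inner product over interior cells. -/
def ipd (Nx Ny : ℕ) (dx dy : ℝ) (f g : ℕ → ℕ → ℝ) : ℝ :=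
  ∑ j ∈ Icc 1 Nx, ∑ k ∈ Icc 1 Ny, f j k * g j k * (dx * dy)

/-- Discrete gradient norm squared ‖∇_h f‖². -/
def gradsq (Nx Ny : ℕ) (dx dy : ℝ) (f : ℕ → ℕ → ℝ) : ℝ :=
  ∑ j ∈ Icc 1 Nx, ∑ k ∈ Icc 1 Ny,
    (((f (j+1) k - f j k)/dx)^2 + ((f j (k+1) - f j k)/dy)^2) * (dx * dy)


lemma sbp_core (N : ℕ) (b g : ℕ → ℝ) :
    ∑ j ∈ Icc 1 N, ((b j - b (j-1)) * g j + b j * (g (j+1) - g j))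
      = b N * g (N+1) - b 0 * g 1 := by
  induction N with
  | zero => simp
  | succ n ih =>
    rw [Finset.sum_Icc_succ_top (by omega), ih]
    simp only [Nat.add_sub_cancel]
    ring

lemma sbp1 (N : ℕ) (b g : ℕ → ℝ) (hb0 : b 0 = 0) (hbN : b N = 0) :
    ∑ j ∈ Icc 1 N, b j * (g (j+1) - g j) = -∑ j ∈ Icc 1 N, (b j - b (j-1)) * g j := by
  have h := sbp_core N b g
  rw [Finset.sum_add_distrib, hb0, hbN] at h
  linarith

lemma tele1 (N : ℕ) (F : ℕ → ℝ) :
    ∑ j ∈ Icc 1 N, (F j - F (j-1)) = F N - F 0 := by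
  induction N with
  | zero => simp
  | succ n ih =>
    rw [Finset.sum_Icc_succ_top (by omega), ih]
    simp only [Nat.add_sub_cancel]
    ring

lemma shift1 (N : ℕ) (F : ℕ → ℝ) (h0 : F 0 = 0) (hN : F N = 0) :
    ∑ j ∈ Icc 1 N, F j = ∑ j ∈ Icc 1 N, F (j-1) := by
  have h := tele1 N F
  rw [Finset.sum_sub_distrib, h0, hN] at h
  linarith

lemma sbp2x (Nx Ny : ℕ) (b g : ℕ → ℕ → ℝ)
    (h0 : ∀ k, k ∈ Icc 1 Ny → b 0 k = 0) (hN : ∀ k, k ∈ Icc 1 Ny → b Nx k = 0) :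
    ∑ j ∈ Icc 1 Nx, ∑ k ∈ Icc 1 Ny, b j k * (g (j+1) k - g j k)
      = -∑ j ∈ Icc 1 Nx, ∑ k ∈ Icc 1 Ny, (b j k - b (j-1) k) * g j k := by
  rw [Finset.sum_comm, Finset.sum_comm (s := Icc 1 Nx)]
  rw [← Finset.sum_neg_distrib]
  exact Finset.sum_congr rfl fun k hk =>
    sbp1 Nx (fun j => b j k) (fun j => g j k) (h0 k hk) (hN k hk)

lemma sbp2y (Nx Ny : ℕ) (b g : ℕ → ℕ → ℝ)
    (h0 : ∀ j, j ∈ Icc 1 Nx → b j 0 = 0) (hN : ∀ j, j ∈ Icc 1 Nx → b j Ny = 0) :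
    ∑ j ∈ Icc 1 Nx, ∑ k ∈ Icc 1 Ny, b j k * (g j (k+1) - g j k)
      = -∑ j ∈ Icc 1 Nx, ∑ k ∈ Icc 1 Ny, (b j k - b j (k-1)) * g j k := by
  rw [← Finset.sum_neg_distrib]
  exact Finset.sum_congr rfl fun j hj =>
    sbp1 Ny (fun k => b j k) (fun k => g j k) (h0 j hj) (hN j hj)

lemma shift2x (Nx Ny : ℕ) (F : ℕ → ℕ → ℝ)
    (h0 : ∀ k, k ∈ Icc 1 Ny → F 0 k = 0) (hN : ∀ k, k ∈ Icc 1 Ny → F Nx k = 0) :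
    ∑ j ∈ Icc 1 Nx, ∑ k ∈ Icc 1 Ny, F j k = ∑ j ∈ Icc 1 Nx, ∑ k ∈ Icc 1 Ny, F (j-1) k := by
  rw [Finset.sum_comm, Finset.sum_comm (s := Icc 1 Nx)]
  exact Finset.sum_congr rfl fun k hk =>
    shift1 Nx (fun j => F j k) (h0 k hk) (hN k hk)

lemma shift2y (Nx Ny : ℕ) (F : ℕ → ℕ → ℝ)
    (h0 : ∀ j, j ∈ Icc 1 Nx → F j 0 = 0) (hN : ∀ j, j ∈ Icc 1 Nx → F j Ny = 0) :
    ∑ j ∈ Icc 1 Nx, ∑ k ∈ Icc 1 Ny, F j k = ∑ j ∈ Icc 1 Nx, ∑ k ∈ Icc 1 Ny, F j (k-1) := by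
  exact Finset.sum_congr rfl fun j hj =>
    shift1 Ny (fun k => F j k) (h0 j hj) (hN j hj)

lemma sum_dlap {ι : Type*} [Fintype ι] (dx dy : ℝ) (a : ι → ℕ → ℕ → ℝ) (j k : ℕ) :
    ∑ i, dlap dx dy (a i) j k = dlap dx dy (fun j k => ∑ i, a i j k) j k := by
  simp only [dlap, Finset.mul_sum, ← Finset.sum_sub_distrib, Finset.sum_div,
    ← Finset.sum_add_distrib]

/-- Multi-ion discrete energy identity for the semi-implicit scheme. -/
theorem multiion_discrete_energy_identity {ι : Type*} [Fintype ι]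
    (Nx Ny : ℕ) (dx dy dt : ℝ)
    (hdx : 0 < dx) (hdy : 0 < dy) (hdt : 0 < dt)
    (z : ι → ℝ) (c0 c1 : ι → ℕ → ℕ → ℝ) (φ0 φ1 : ℕ → ℕ → ℝ)
    (hgc0 : ∀ i, Ghost Nx Ny (c0 i)) (hgc1 : ∀ i, Ghost Nx Ny (c1 i))
    (hgφ0 : Ghost Nx Ny φ0) (hgφ1 : Ghost Nx Ny φ1)
    (hc0 : ∀ i j k, 0 ≤ c0 i j k)
    (hscheme : ∀ i, ∀ j ∈ Icc 1 Nx, ∀ k ∈ Icc 1 Ny,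
      (c1 i j k - c0 i j k)/dt =
        dlap dx dy (fun j k => (c0 i j k + c1 i j k)/2) j k
        + z i * (ddriftx dx (c0 i) (fun j k => (φ0 j k + φ1 j k)/2) j k
                  + ddrifty dy (c0 i) (fun j k => (φ0 j k + φ1 j k)/2) j k))
    (hpois0 : ∀ j ∈ Icc 1 Nx, ∀ k ∈ Icc 1 Ny,
      -(dlap dx dy φ0 j k) = ∑ i, z i * c0 i j k)
    (hpois1 : ∀ j ∈ Icc 1 Nx, ∀ k ∈ Icc 1 Ny,
      -(dlap dx dy φ1 j k) = ∑ i, z i * c1 i j k) :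
    (gradsq Nx Ny dx dy φ1 / 2 - gradsq Nx Ny dx dy φ0 / 2) / dt
      = -(∑ j ∈ Icc 1 Nx, ∑ k ∈ Icc 1 Ny,
            (∑ i, z i * (c0 i j k + c1 i j k)/2)^2 * (dx * dy))
        - (∑ j ∈ Icc 1 Nx, ∑ k ∈ Icc 1 Ny,
            (∑ i, (z i)^2 * (c0 i (j-1) k + c0 i j k)/2)
              * (((φ0 j k + φ1 j k)/2 - (φ0 (j-1) k + φ1 (j-1) k)/2)/dx)^2 * (dx * dy))
        - (∑ j ∈ Icc 1 Nx, ∑ k ∈ Icc 1 Ny,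
            (∑ i, (z i)^2 * (c0 i j (k-1) + c0 i j k)/2)
              * (((φ0 j k + φ1 j k)/2 - (φ0 j (k-1) + φ1 j (k-1))/2)/dy)^2 * (dx * dy))
    ∧ (gradsq Nx Ny dx dy φ1 / 2 - gradsq Nx Ny dx dy φ0 / 2) / dt ≤ 0 := by
  -- First half: energy difference equals ⟨ρ1 - ρ0, ψ⟩
  have hP : gradsq Nx Ny dx dy φ1 / 2 - gradsq Nx Ny dx dy φ0 / 2
      = ∑ j ∈ Icc 1 Nx, ∑ k ∈ Icc 1 Ny,
          ((∑ i, z i * c1 i j k) - (∑ i, z i * c0 i j k)) * ((φ0 j k + φ1 j k)/2) * (dx * dy) := by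
    have hA : gradsq Nx Ny dx dy φ1 / 2 - gradsq Nx Ny dx dy φ0 / 2
        = ∑ j ∈ Icc 1 Nx, ∑ k ∈ Icc 1 Ny,
            (((φ1 (j+1) k - φ0 (j+1) k) - (φ1 j k - φ0 j k))/dx^2*(dx*dy)
                * ((φ0 (j+1) k + φ1 (j+1) k)/2 - (φ0 j k + φ1 j k)/2)
             + ((φ1 j (k+1) - φ0 j (k+1)) - (φ1 j k - φ0 j k))/dy^2*(dx*dy)
                * ((φ0 j (k+1) + φ1 j (k+1))/2 - (φ0 j k + φ1 j k)/2)) := by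
      simp only [gradsq, Finset.sum_div, ← Finset.sum_sub_distrib]
      exact Finset.sum_congr rfl fun j _ => Finset.sum_congr rfl fun k _ => by ring
    rw [hA]
    simp only [Finset.sum_add_distrib]
    have h1 := sbp2x Nx Ny
        (fun j k => ((φ1 (j+1) k - φ0 (j+1) k) - (φ1 j k - φ0 j k))/dx^2*(dx*dy))
        (fun j k => (φ0 j k + φ1 j k)/2)
        (fun k _ => by simp [hgφ0.1 k, hgφ1.1 k])
        (fun k _ => by simp [hgφ0.2.1 k, hgφ1.2.1 k])
    have h2 := sbp2y Nx Ny
        (fun j k => ((φ1 j (k+1) - φ0 j (k+1)) - (φ1 j k - φ0 j k))/dy^2*(dx*dy))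
        (fun j k => (φ0 j k + φ1 j k)/2)
        (fun j _ => by simp [hgφ0.2.2.1 j, hgφ1.2.2.1 j])
        (fun j _ => by simp [hgφ0.2.2.2 j, hgφ1.2.2.2 j])
    beta_reduce at h1 h2
    rw [h1, h2, ← neg_add]
    simp only [← Finset.sum_add_distrib, ← Finset.sum_neg_distrib]
    refine Finset.sum_congr rfl fun j hj => Finset.sum_congr rfl fun k hk => ?_
    rw [Nat.sub_add_cancel (Finset.mem_Icc.mp hj).1, Nat.sub_add_cancel (Finset.mem_Icc.mp hk).1]
    have h0' := hpois0 j hj k hk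
    have h1' := hpois1 j hj k hk
    simp only [dlap] at h0' h1'
    linear_combination (h1' - h0') * ((φ0 j k + φ1 j k)/2 * (dx*dy))
  have key : (gradsq Nx Ny dx dy φ1 / 2 - gradsq Nx Ny dx dy φ0 / 2) / dt
      = -(∑ j ∈ Icc 1 Nx, ∑ k ∈ Icc 1 Ny,
            (∑ i, z i * (c0 i j k + c1 i j k)/2)^2 * (dx * dy))
        - (∑ j ∈ Icc 1 Nx, ∑ k ∈ Icc 1 Ny,
            (∑ i, (z i)^2 * (c0 i (j-1) k + c0 i j k)/2)
              * (((φ0 j k + φ1 j k)/2 - (φ0 (j-1) k + φ1 (j-1) k)/2)/dx)^2 * (dx * dy))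
        - (∑ j ∈ Icc 1 Nx, ∑ k ∈ Icc 1 Ny,
            (∑ i, (z i)^2 * (c0 i j (k-1) + c0 i j k)/2)
              * (((φ0 j k + φ1 j k)/2 - (φ0 j (k-1) + φ1 j (k-1))/2)/dy)^2 * (dx * dy)) := by
    rw [hP]
    -- abbreviations (only in comments): Ψ j k = (φ0 j k + φ1 j k)/2, σ j k = ∑ i, z i * (c0 i j k + c1 i j k)/2
    -- Step M: master pointwise rewrite
    have hmaster : (∑ j ∈ Icc 1 Nx, ∑ k ∈ Icc 1 Ny,
          ((∑ i, z i * c1 i j k) - (∑ i, z i * c0 i j k)) * ((φ0 j k + φ1 j k)/2) * (dx * dy)) / dt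
        = (∑ j ∈ Icc 1 Nx, ∑ k ∈ Icc 1 Ny,
            dlap dx dy (fun j k => ∑ i, z i * (c0 i j k + c1 i j k)/2) j k
              * ((φ0 j k + φ1 j k)/2) * (dx * dy))
          + ((∑ j ∈ Icc 1 Nx, ∑ k ∈ Icc 1 Ny,
            (∑ i, z i^2 * ddriftx dx (c0 i) (fun j k => (φ0 j k + φ1 j k)/2) j k)
              * ((φ0 j k + φ1 j k)/2) * (dx * dy))
          + (∑ j ∈ Icc 1 Nx, ∑ k ∈ Icc 1 Ny,
            (∑ i, z i^2 * ddrifty dy (c0 i) (fun j k => (φ0 j k + φ1 j k)/2) j k)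
              * ((φ0 j k + φ1 j k)/2) * (dx * dy))) := by
      simp only [Finset.sum_div, ← Finset.sum_add_distrib]
      refine Finset.sum_congr rfl fun j hj => Finset.sum_congr rfl fun k hk => ?_
      have e1 : ((∑ i, z i * c1 i j k) - ∑ i, z i * c0 i j k)/dt
          = ∑ i, z i * ((c1 i j k - c0 i j k)/dt) := by
        rw [← Finset.sum_sub_distrib, Finset.sum_div]
        exact Finset.sum_congr rfl fun i _ => by ring
      have hstep : ((∑ i, z i * c1 i j k) - ∑ i, z i * c0 i j k)/dt
          = dlap dx dy (fun j k => ∑ i, z i * (c0 i j k + c1 i j k)/2) j k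
            + ((∑ i, z i^2 * ddriftx dx (c0 i) (fun j k => (φ0 j k + φ1 j k)/2) j k)
               + (∑ i, z i^2 * ddrifty dy (c0 i) (fun j k => (φ0 j k + φ1 j k)/2) j k)) := by
        rw [e1]
        calc ∑ i, z i * ((c1 i j k - c0 i j k)/dt)
            = ∑ i, (dlap dx dy (fun j k => z i * (c0 i j k + c1 i j k)/2) j k
                + (z i^2 * ddriftx dx (c0 i) (fun j k => (φ0 j k + φ1 j k)/2) j k
                   + z i^2 * ddrifty dy (c0 i) (fun j k => (φ0 j k + φ1 j k)/2) j k)) := by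
              refine Finset.sum_congr rfl fun i _ => ?_
              rw [hscheme i j hj k hk]
              simp only [dlap]
              ring
          _ = (∑ i, dlap dx dy (fun j k => z i * (c0 i j k + c1 i j k)/2) j k)
                + ((∑ i, z i^2 * ddriftx dx (c0 i) (fun j k => (φ0 j k + φ1 j k)/2) j k)
                   + (∑ i, z i^2 * ddrifty dy (c0 i) (fun j k => (φ0 j k + φ1 j k)/2) j k)) := by
              simp only [Finset.sum_add_distrib]
          _ = dlap dx dy (fun j k => ∑ i, z i * (c0 i j k + c1 i j k)/2) j k
                + ((∑ i, z i^2 * ddriftx dx (c0 i) (fun j k => (φ0 j k + φ1 j k)/2) j k)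
                   + (∑ i, z i^2 * ddrifty dy (c0 i) (fun j k => (φ0 j k + φ1 j k)/2) j k)) := by
              congr 1
              exact sum_dlap dx dy (fun i j k => z i * (c0 i j k + c1 i j k)/2) j k
      linear_combination hstep * ((φ0 j k + φ1 j k)/2 * (dx*dy))
    rw [hmaster]
    -- ghost facts for σ
    have hσx0 : ∀ k : ℕ, (∑ i, z i * (c0 i 0 k + c1 i 0 k)/2) = ∑ i, z i * (c0 i 1 k + c1 i 1 k)/2 :=
      fun k => Finset.sum_congr rfl fun i _ => by rw [(hgc0 i).1 k, (hgc1 i).1 k]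
    have hσxN : ∀ k : ℕ, (∑ i, z i * (c0 i (Nx+1) k + c1 i (Nx+1) k)/2) = ∑ i, z i * (c0 i Nx k + c1 i Nx k)/2 :=
      fun k => Finset.sum_congr rfl fun i _ => by rw [(hgc0 i).2.1 k, (hgc1 i).2.1 k]
    have hσy0 : ∀ j : ℕ, (∑ i, z i * (c0 i j 0 + c1 i j 0)/2) = ∑ i, z i * (c0 i j 1 + c1 i j 1)/2 :=
      fun j => Finset.sum_congr rfl fun i _ => by rw [(hgc0 i).2.2.1 j, (hgc1 i).2.2.1 j]
    have hσyN : ∀ j : ℕ, (∑ i, z i * (c0 i j (Ny+1) + c1 i j (Ny+1))/2) = ∑ i, z i * (c0 i j Ny + c1 i j Ny)/2 :=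
      fun j => Finset.sum_congr rfl fun i _ => by rw [(hgc0 i).2.2.2 j, (hgc1 i).2.2.2 j]
    have hσsplit : ∀ j k : ℕ, (∑ i, z i * (c0 i j k + c1 i j k)/2)
        = ((∑ i, z i * c0 i j k) + ∑ i, z i * c1 i j k)/2 := by
      intro j k
      rw [← Finset.sum_add_distrib, Finset.sum_div]
      exact Finset.sum_congr rfl fun i _ => by ring
    -- ================= Term 1, x part =================
    have hX : (∑ j ∈ Icc 1 Nx, ∑ k ∈ Icc 1 Ny,
            (((∑ i, z i * (c0 i (j+1) k + c1 i (j+1) k)/2) - ∑ i, z i * (c0 i j k + c1 i j k)/2)/dx^2*(dx*dy)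
              - ((∑ i, z i * (c0 i j k + c1 i j k)/2) - ∑ i, z i * (c0 i (j-1) k + c1 i (j-1) k)/2)/dx^2*(dx*dy))
              * ((φ0 j k + φ1 j k)/2))
        = ∑ j ∈ Icc 1 Nx, ∑ k ∈ Icc 1 Ny,
            (((φ0 (j+1) k + φ1 (j+1) k)/2 - (φ0 j k + φ1 j k)/2)/dx^2*(dx*dy)
              - ((φ0 j k + φ1 j k)/2 - (φ0 (j-1) k + φ1 (j-1) k)/2)/dx^2*(dx*dy))
              * (∑ i, z i * (c0 i j k + c1 i j k)/2) := by
      have hbσ := sbp2x Nx Ny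
        (fun j k => ((∑ i, z i * (c0 i (j+1) k + c1 i (j+1) k)/2) - ∑ i, z i * (c0 i j k + c1 i j k)/2)/dx^2*(dx*dy))
        (fun j k => (φ0 j k + φ1 j k)/2)
        (fun k _ => by simp [hσx0 k]) (fun k _ => by simp [hσxN k])
      have hbΨ := sbp2x Nx Ny
        (fun j k => ((φ0 (j+1) k + φ1 (j+1) k)/2 - (φ0 j k + φ1 j k)/2)/dx^2*(dx*dy))
        (fun j k => ∑ i, z i * (c0 i j k + c1 i j k)/2)
        (fun k _ => by simp [hgφ0.1 k, hgφ1.1 k]) (fun k _ => by simp [hgφ0.2.1 k, hgφ1.2.1 k])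
      beta_reduce at hbσ hbΨ
      have step1 : (∑ j ∈ Icc 1 Nx, ∑ k ∈ Icc 1 Ny,
              (((∑ i, z i * (c0 i (j+1) k + c1 i (j+1) k)/2) - ∑ i, z i * (c0 i j k + c1 i j k)/2)/dx^2*(dx*dy)
                - ((∑ i, z i * (c0 i j k + c1 i j k)/2) - ∑ i, z i * (c0 i (j-1) k + c1 i (j-1) k)/2)/dx^2*(dx*dy))
                * ((φ0 j k + φ1 j k)/2))
          = -∑ j ∈ Icc 1 Nx, ∑ k ∈ Icc 1 Ny,
              ((((∑ i, z i * (c0 i (j+1) k + c1 i (j+1) k)/2) - ∑ i, z i * (c0 i j k + c1 i j k)/2)/dx^2*(dx*dy))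
                * ((φ0 (j+1) k + φ1 (j+1) k)/2 - (φ0 j k + φ1 j k)/2)) := by
        rw [hbσ, neg_neg]
        refine Finset.sum_congr rfl fun j hj => Finset.sum_congr rfl fun k hk => ?_
        rw [Nat.sub_add_cancel (Finset.mem_Icc.mp hj).1]
      have step2 : (∑ j ∈ Icc 1 Nx, ∑ k ∈ Icc 1 Ny,
              ((((∑ i, z i * (c0 i (j+1) k + c1 i (j+1) k)/2) - ∑ i, z i * (c0 i j k + c1 i j k)/2)/dx^2*(dx*dy))
                * ((φ0 (j+1) k + φ1 (j+1) k)/2 - (φ0 j k + φ1 j k)/2)))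
          = ∑ j ∈ Icc 1 Nx, ∑ k ∈ Icc 1 Ny,
              ((((φ0 (j+1) k + φ1 (j+1) k)/2 - (φ0 j k + φ1 j k)/2)/dx^2*(dx*dy))
                * ((∑ i, z i * (c0 i (j+1) k + c1 i (j+1) k)/2) - ∑ i, z i * (c0 i j k + c1 i j k)/2)) :=
        Finset.sum_congr rfl fun j _ => Finset.sum_congr rfl fun k _ => by ring
      have step3 : (∑ j ∈ Icc 1 Nx, ∑ k ∈ Icc 1 Ny,
              ((((φ0 (j+1) k + φ1 (j+1) k)/2 - (φ0 j k + φ1 j k)/2)/dx^2*(dx*dy))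
                * ((∑ i, z i * (c0 i (j+1) k + c1 i (j+1) k)/2) - ∑ i, z i * (c0 i j k + c1 i j k)/2)))
          = -∑ j ∈ Icc 1 Nx, ∑ k ∈ Icc 1 Ny,
              (((φ0 (j+1) k + φ1 (j+1) k)/2 - (φ0 j k + φ1 j k)/2)/dx^2*(dx*dy)
                - ((φ0 j k + φ1 j k)/2 - (φ0 (j-1) k + φ1 (j-1) k)/2)/dx^2*(dx*dy))
                * (∑ i, z i * (c0 i j k + c1 i j k)/2) := by
        rw [hbΨ, neg_inj]
        refine Finset.sum_congr rfl fun j hj => Finset.sum_congr rfl fun k hk => ?_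
        rw [Nat.sub_add_cancel (Finset.mem_Icc.mp hj).1]
      rw [step1, step2, step3, neg_neg]
    -- ================= Term 1, y part =================
    have hY : (∑ j ∈ Icc 1 Nx, ∑ k ∈ Icc 1 Ny,
            (((∑ i, z i * (c0 i j (k+1) + c1 i j (k+1))/2) - ∑ i, z i * (c0 i j k + c1 i j k)/2)/dy^2*(dx*dy)
              - ((∑ i, z i * (c0 i j k + c1 i j k)/2) - ∑ i, z i * (c0 i j (k-1) + c1 i j (k-1))/2)/dy^2*(dx*dy))
              * ((φ0 j k + φ1 j k)/2))
        = ∑ j ∈ Icc 1 Nx, ∑ k ∈ Icc 1 Ny,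
            (((φ0 j (k+1) + φ1 j (k+1))/2 - (φ0 j k + φ1 j k)/2)/dy^2*(dx*dy)
              - ((φ0 j k + φ1 j k)/2 - (φ0 j (k-1) + φ1 j (k-1))/2)/dy^2*(dx*dy))
              * (∑ i, z i * (c0 i j k + c1 i j k)/2) := by
      have hbσ := sbp2y Nx Ny
        (fun j k => ((∑ i, z i * (c0 i j (k+1) + c1 i j (k+1))/2) - ∑ i, z i * (c0 i j k + c1 i j k)/2)/dy^2*(dx*dy))
        (fun j k => (φ0 j k + φ1 j k)/2)
        (fun j _ => by simp [hσy0 j]) (fun j _ => by simp [hσyN j])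
      have hbΨ := sbp2y Nx Ny
        (fun j k => ((φ0 j (k+1) + φ1 j (k+1))/2 - (φ0 j k + φ1 j k)/2)/dy^2*(dx*dy))
        (fun j k => ∑ i, z i * (c0 i j k + c1 i j k)/2)
        (fun j _ => by simp [hgφ0.2.2.1 j, hgφ1.2.2.1 j]) (fun j _ => by simp [hgφ0.2.2.2 j, hgφ1.2.2.2 j])
      beta_reduce at hbσ hbΨ
      have step1 : (∑ j ∈ Icc 1 Nx, ∑ k ∈ Icc 1 Ny,
              (((∑ i, z i * (c0 i j (k+1) + c1 i j (k+1))/2) - ∑ i, z i * (c0 i j k + c1 i j k)/2)/dy^2*(dx*dy)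
                - ((∑ i, z i * (c0 i j k + c1 i j k)/2) - ∑ i, z i * (c0 i j (k-1) + c1 i j (k-1))/2)/dy^2*(dx*dy))
                * ((φ0 j k + φ1 j k)/2))
          = -∑ j ∈ Icc 1 Nx, ∑ k ∈ Icc 1 Ny,
              ((((∑ i, z i * (c0 i j (k+1) + c1 i j (k+1))/2) - ∑ i, z i * (c0 i j k + c1 i j k)/2)/dy^2*(dx*dy))
                * ((φ0 j (k+1) + φ1 j (k+1))/2 - (φ0 j k + φ1 j k)/2)) := by
        rw [hbσ, neg_neg]
        refine Finset.sum_congr rfl fun j hj => Finset.sum_congr rfl fun k hk => ?_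
        rw [Nat.sub_add_cancel (Finset.mem_Icc.mp hk).1]
      have step2 : (∑ j ∈ Icc 1 Nx, ∑ k ∈ Icc 1 Ny,
              ((((∑ i, z i * (c0 i j (k+1) + c1 i j (k+1))/2) - ∑ i, z i * (c0 i j k + c1 i j k)/2)/dy^2*(dx*dy))
                * ((φ0 j (k+1) + φ1 j (k+1))/2 - (φ0 j k + φ1 j k)/2)))
          = ∑ j ∈ Icc 1 Nx, ∑ k ∈ Icc 1 Ny,
              ((((φ0 j (k+1) + φ1 j (k+1))/2 - (φ0 j k + φ1 j k)/2)/dy^2*(dx*dy))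
                * ((∑ i, z i * (c0 i j (k+1) + c1 i j (k+1))/2) - ∑ i, z i * (c0 i j k + c1 i j k)/2)) :=
        Finset.sum_congr rfl fun j _ => Finset.sum_congr rfl fun k _ => by ring
      have step3 : (∑ j ∈ Icc 1 Nx, ∑ k ∈ Icc 1 Ny,
              ((((φ0 j (k+1) + φ1 j (k+1))/2 - (φ0 j k + φ1 j k)/2)/dy^2*(dx*dy))
                * ((∑ i, z i * (c0 i j (k+1) + c1 i j (k+1))/2) - ∑ i, z i * (c0 i j k + c1 i j k)/2)))
          = -∑ j ∈ Icc 1 Nx, ∑ k ∈ Icc 1 Ny,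
              (((φ0 j (k+1) + φ1 j (k+1))/2 - (φ0 j k + φ1 j k)/2)/dy^2*(dx*dy)
                - ((φ0 j k + φ1 j k)/2 - (φ0 j (k-1) + φ1 j (k-1))/2)/dy^2*(dx*dy))
                * (∑ i, z i * (c0 i j k + c1 i j k)/2) := by
        rw [hbΨ, neg_inj]
        refine Finset.sum_congr rfl fun j hj => Finset.sum_congr rfl fun k hk => ?_
        rw [Nat.sub_add_cancel (Finset.mem_Icc.mp hk).1]
      rw [step1, step2, step3, neg_neg]
    -- ================= Term 1 assembled =================
    have hS1 : (∑ j ∈ Icc 1 Nx, ∑ k ∈ Icc 1 Ny,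
          dlap dx dy (fun j k => ∑ i, z i * (c0 i j k + c1 i j k)/2) j k
            * ((φ0 j k + φ1 j k)/2) * (dx * dy))
        = -(∑ j ∈ Icc 1 Nx, ∑ k ∈ Icc 1 Ny,
            (∑ i, z i * (c0 i j k + c1 i j k)/2)^2 * (dx * dy)) := by
      have split : (∑ j ∈ Icc 1 Nx, ∑ k ∈ Icc 1 Ny,
            dlap dx dy (fun j k => ∑ i, z i * (c0 i j k + c1 i j k)/2) j k
              * ((φ0 j k + φ1 j k)/2) * (dx * dy))
          = ∑ j ∈ Icc 1 Nx, ∑ k ∈ Icc 1 Ny,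
              ((((∑ i, z i * (c0 i (j+1) k + c1 i (j+1) k)/2) - ∑ i, z i * (c0 i j k + c1 i j k)/2)/dx^2*(dx*dy)
                - ((∑ i, z i * (c0 i j k + c1 i j k)/2) - ∑ i, z i * (c0 i (j-1) k + c1 i (j-1) k)/2)/dx^2*(dx*dy))
                * ((φ0 j k + φ1 j k)/2)
              + (((∑ i, z i * (c0 i j (k+1) + c1 i j (k+1))/2) - ∑ i, z i * (c0 i j k + c1 i j k)/2)/dy^2*(dx*dy)
                - ((∑ i, z i * (c0 i j k + c1 i j k)/2) - ∑ i, z i * (c0 i j (k-1) + c1 i j (k-1))/2)/dy^2*(dx*dy))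
                * ((φ0 j k + φ1 j k)/2)) := by
        refine Finset.sum_congr rfl fun j _ => Finset.sum_congr rfl fun k _ => ?_
        simp only [dlap]
        ring
      rw [split]
      simp only [Finset.sum_add_distrib]
      rw [hX, hY]
      simp only [← Finset.sum_add_distrib, ← Finset.sum_neg_distrib]
      refine Finset.sum_congr rfl fun j hj => Finset.sum_congr rfl fun k hk => ?_
      have h0' := hpois0 j hj k hk
      have h1' := hpois1 j hj k hk
      simp only [dlap] at h0' h1'
      have hσ := hσsplit j k
      linear_combination (-((∑ i, z i * (c0 i j k + c1 i j k)/2) * (dx*dy)/2)) * h0'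
        + (-((∑ i, z i * (c0 i j k + c1 i j k)/2) * (dx*dy)/2)) * h1'
        + ((∑ i, z i * (c0 i j k + c1 i j k)/2) * (dx*dy)) * hσ
    -- ================= Term 2 (x drift) =================
    have hS2 : (∑ j ∈ Icc 1 Nx, ∑ k ∈ Icc 1 Ny,
          (∑ i, z i^2 * ddriftx dx (c0 i) (fun j k => (φ0 j k + φ1 j k)/2) j k)
            * ((φ0 j k + φ1 j k)/2) * (dx * dy))
        = -(∑ j ∈ Icc 1 Nx, ∑ k ∈ Icc 1 Ny,
            (∑ i, (z i)^2 * (c0 i (j-1) k + c0 i j k)/2)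
              * (((φ0 j k + φ1 j k)/2 - (φ0 (j-1) k + φ1 (j-1) k)/2)/dx)^2 * (dx * dy)) := by
      have swap1 : (∑ j ∈ Icc 1 Nx, ∑ k ∈ Icc 1 Ny,
            (∑ i, z i^2 * ddriftx dx (c0 i) (fun j k => (φ0 j k + φ1 j k)/2) j k)
              * ((φ0 j k + φ1 j k)/2) * (dx * dy))
          = ∑ i, ∑ j ∈ Icc 1 Nx, ∑ k ∈ Icc 1 Ny,
              z i^2 * ddriftx dx (c0 i) (fun j k => (φ0 j k + φ1 j k)/2) j k
                * ((φ0 j k + φ1 j k)/2) * (dx * dy) := by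
        simp only [Finset.sum_mul]
        exact (Finset.sum_congr rfl fun j _ => Finset.sum_comm).trans Finset.sum_comm
      have peri : ∀ i : ι, (∑ j ∈ Icc 1 Nx, ∑ k ∈ Icc 1 Ny,
              z i^2 * ddriftx dx (c0 i) (fun j k => (φ0 j k + φ1 j k)/2) j k
                * ((φ0 j k + φ1 j k)/2) * (dx * dy))
          = -(∑ j ∈ Icc 1 Nx, ∑ k ∈ Icc 1 Ny,
              z i^2 * ((c0 i (j-1) k + c0 i j k)/2)
                * (((φ0 j k + φ1 j k)/2 - (φ0 (j-1) k + φ1 (j-1) k)/2)/dx)^2 * (dx * dy)) := by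
        intro i
        have hb := sbp2x Nx Ny
          (fun j k => z i^2 * ((c0 i j k + c0 i (j+1) k)/2
              * ((φ0 (j+1) k + φ1 (j+1) k)/2 - (φ0 j k + φ1 j k)/2))/dx^2*(dx*dy))
          (fun j k => (φ0 j k + φ1 j k)/2)
          (fun k _ => by simp [hgφ0.1 k, hgφ1.1 k]) (fun k _ => by simp [hgφ0.2.1 k, hgφ1.2.1 k])
        have hs := shift2x Nx Ny
          (fun j k => z i^2 * ((c0 i j k + c0 i (j+1) k)/2)
              * (((φ0 (j+1) k + φ1 (j+1) k)/2 - (φ0 j k + φ1 j k)/2)/dx)^2 * (dx*dy))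
          (fun k _ => by simp [hgφ0.1 k, hgφ1.1 k]) (fun k _ => by simp [hgφ0.2.1 k, hgφ1.2.1 k])
        beta_reduce at hb hs
        have step1 : (∑ j ∈ Icc 1 Nx, ∑ k ∈ Icc 1 Ny,
                z i^2 * ddriftx dx (c0 i) (fun j k => (φ0 j k + φ1 j k)/2) j k
                  * ((φ0 j k + φ1 j k)/2) * (dx * dy))
            = -∑ j ∈ Icc 1 Nx, ∑ k ∈ Icc 1 Ny,
                ((z i^2 * ((c0 i j k + c0 i (j+1) k)/2
                    * ((φ0 (j+1) k + φ1 (j+1) k)/2 - (φ0 j k + φ1 j k)/2))/dx^2*(dx*dy))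
                  * ((φ0 (j+1) k + φ1 (j+1) k)/2 - (φ0 j k + φ1 j k)/2)) := by
          rw [hb, neg_neg]
          refine Finset.sum_congr rfl fun j hj => Finset.sum_congr rfl fun k hk => ?_
          simp only [ddriftx]
          rw [Nat.sub_add_cancel (Finset.mem_Icc.mp hj).1]
          ring
        have step2 : (∑ j ∈ Icc 1 Nx, ∑ k ∈ Icc 1 Ny,
                ((z i^2 * ((c0 i j k + c0 i (j+1) k)/2
                    * ((φ0 (j+1) k + φ1 (j+1) k)/2 - (φ0 j k + φ1 j k)/2))/dx^2*(dx*dy))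
                  * ((φ0 (j+1) k + φ1 (j+1) k)/2 - (φ0 j k + φ1 j k)/2)))
            = ∑ j ∈ Icc 1 Nx, ∑ k ∈ Icc 1 Ny,
                z i^2 * ((c0 i j k + c0 i (j+1) k)/2)
                  * (((φ0 (j+1) k + φ1 (j+1) k)/2 - (φ0 j k + φ1 j k)/2)/dx)^2 * (dx*dy) :=
          Finset.sum_congr rfl fun j _ => Finset.sum_congr rfl fun k _ => by ring
        have step3 : (∑ j ∈ Icc 1 Nx, ∑ k ∈ Icc 1 Ny,
                z i^2 * ((c0 i j k + c0 i (j+1) k)/2)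
                  * (((φ0 (j+1) k + φ1 (j+1) k)/2 - (φ0 j k + φ1 j k)/2)/dx)^2 * (dx*dy))
            = ∑ j ∈ Icc 1 Nx, ∑ k ∈ Icc 1 Ny,
                z i^2 * ((c0 i (j-1) k + c0 i j k)/2)
                  * (((φ0 j k + φ1 j k)/2 - (φ0 (j-1) k + φ1 (j-1) k)/2)/dx)^2 * (dx * dy) := by
          rw [hs]
          refine Finset.sum_congr rfl fun j hj => Finset.sum_congr rfl fun k hk => ?_
          rw [Nat.sub_add_cancel (Finset.mem_Icc.mp hj).1]
        rw [step1, step2, step3]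
      have swap2 : (∑ i : ι, -(∑ j ∈ Icc 1 Nx, ∑ k ∈ Icc 1 Ny,
              z i^2 * ((c0 i (j-1) k + c0 i j k)/2)
                * (((φ0 j k + φ1 j k)/2 - (φ0 (j-1) k + φ1 (j-1) k)/2)/dx)^2 * (dx * dy)))
          = -(∑ j ∈ Icc 1 Nx, ∑ k ∈ Icc 1 Ny,
            (∑ i, (z i)^2 * (c0 i (j-1) k + c0 i j k)/2)
              * (((φ0 j k + φ1 j k)/2 - (φ0 (j-1) k + φ1 (j-1) k)/2)/dx)^2 * (dx * dy)) := by
        rw [Finset.sum_neg_distrib, neg_inj]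
        refine Finset.sum_comm.trans (Finset.sum_congr rfl fun j _ =>
          Finset.sum_comm.trans (Finset.sum_congr rfl fun k _ => ?_))
        simp only [Finset.sum_mul]
        exact Finset.sum_congr rfl fun i _ => by ring
      rw [swap1]
      rw [Finset.sum_congr rfl fun i _ => peri i]
      exact swap2
    -- ================= Term 3 (y drift) =================
    have hS3 : (∑ j ∈ Icc 1 Nx, ∑ k ∈ Icc 1 Ny,
          (∑ i, z i^2 * ddrifty dy (c0 i) (fun j k => (φ0 j k + φ1 j k)/2) j k)
            * ((φ0 j k + φ1 j k)/2) * (dx * dy))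
        = -(∑ j ∈ Icc 1 Nx, ∑ k ∈ Icc 1 Ny,
            (∑ i, (z i)^2 * (c0 i j (k-1) + c0 i j k)/2)
              * (((φ0 j k + φ1 j k)/2 - (φ0 j (k-1) + φ1 j (k-1))/2)/dy)^2 * (dx * dy)) := by
      have swap1 : (∑ j ∈ Icc 1 Nx, ∑ k ∈ Icc 1 Ny,
            (∑ i, z i^2 * ddrifty dy (c0 i) (fun j k => (φ0 j k + φ1 j k)/2) j k)
              * ((φ0 j k + φ1 j k)/2) * (dx * dy))
          = ∑ i, ∑ j ∈ Icc 1 Nx, ∑ k ∈ Icc 1 Ny,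
              z i^2 * ddrifty dy (c0 i) (fun j k => (φ0 j k + φ1 j k)/2) j k
                * ((φ0 j k + φ1 j k)/2) * (dx * dy) := by
        simp only [Finset.sum_mul]
        exact (Finset.sum_congr rfl fun j _ => Finset.sum_comm).trans Finset.sum_comm
      have peri : ∀ i : ι, (∑ j ∈ Icc 1 Nx, ∑ k ∈ Icc 1 Ny,
              z i^2 * ddrifty dy (c0 i) (fun j k => (φ0 j k + φ1 j k)/2) j k
                * ((φ0 j k + φ1 j k)/2) * (dx * dy))
          = -(∑ j ∈ Icc 1 Nx, ∑ k ∈ Icc 1 Ny,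
              z i^2 * ((c0 i j (k-1) + c0 i j k)/2)
                * (((φ0 j k + φ1 j k)/2 - (φ0 j (k-1) + φ1 j (k-1))/2)/dy)^2 * (dx * dy)) := by
        intro i
        have hb := sbp2y Nx Ny
          (fun j k => z i^2 * ((c0 i j k + c0 i j (k+1))/2
              * ((φ0 j (k+1) + φ1 j (k+1))/2 - (φ0 j k + φ1 j k)/2))/dy^2*(dx*dy))
          (fun j k => (φ0 j k + φ1 j k)/2)
          (fun j _ => by simp [hgφ0.2.2.1 j, hgφ1.2.2.1 j]) (fun j _ => by simp [hgφ0.2.2.2 j, hgφ1.2.2.2 j])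
        have hs := shift2y Nx Ny
          (fun j k => z i^2 * ((c0 i j k + c0 i j (k+1))/2)
              * (((φ0 j (k+1) + φ1 j (k+1))/2 - (φ0 j k + φ1 j k)/2)/dy)^2 * (dx*dy))
          (fun j _ => by simp [hgφ0.2.2.1 j, hgφ1.2.2.1 j]) (fun j _ => by simp [hgφ0.2.2.2 j, hgφ1.2.2.2 j])
        beta_reduce at hb hs
        have step1 : (∑ j ∈ Icc 1 Nx, ∑ k ∈ Icc 1 Ny,
                z i^2 * ddrifty dy (c0 i) (fun j k => (φ0 j k + φ1 j k)/2) j k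
                  * ((φ0 j k + φ1 j k)/2) * (dx * dy))
            = -∑ j ∈ Icc 1 Nx, ∑ k ∈ Icc 1 Ny,
                ((z i^2 * ((c0 i j k + c0 i j (k+1))/2
                    * ((φ0 j (k+1) + φ1 j (k+1))/2 - (φ0 j k + φ1 j k)/2))/dy^2*(dx*dy))
                  * ((φ0 j (k+1) + φ1 j (k+1))/2 - (φ0 j k + φ1 j k)/2)) := by
          rw [hb, neg_neg]
          refine Finset.sum_congr rfl fun j hj => Finset.sum_congr rfl fun k hk => ?_
          simp only [ddrifty]
          rw [Nat.sub_add_cancel (Finset.mem_Icc.mp hk).1]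
          ring
        have step2 : (∑ j ∈ Icc 1 Nx, ∑ k ∈ Icc 1 Ny,
                ((z i^2 * ((c0 i j k + c0 i j (k+1))/2
                    * ((φ0 j (k+1) + φ1 j (k+1))/2 - (φ0 j k + φ1 j k)/2))/dy^2*(dx*dy))
                  * ((φ0 j (k+1) + φ1 j (k+1))/2 - (φ0 j k + φ1 j k)/2)))
            = ∑ j ∈ Icc 1 Nx, ∑ k ∈ Icc 1 Ny,
                z i^2 * ((c0 i j k + c0 i j (k+1))/2)
                  * (((φ0 j (k+1) + φ1 j (k+1))/2 - (φ0 j k + φ1 j k)/2)/dy)^2 * (dx*dy) :=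
          Finset.sum_congr rfl fun j _ => Finset.sum_congr rfl fun k _ => by ring
        have step3 : (∑ j ∈ Icc 1 Nx, ∑ k ∈ Icc 1 Ny,
                z i^2 * ((c0 i j k + c0 i j (k+1))/2)
                  * (((φ0 j (k+1) + φ1 j (k+1))/2 - (φ0 j k + φ1 j k)/2)/dy)^2 * (dx*dy))
            = ∑ j ∈ Icc 1 Nx, ∑ k ∈ Icc 1 Ny,
                z i^2 * ((c0 i j (k-1) + c0 i j k)/2)
                  * (((φ0 j k + φ1 j k)/2 - (φ0 j (k-1) + φ1 j (k-1))/2)/dy)^2 * (dx * dy) := by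
          rw [hs]
          refine Finset.sum_congr rfl fun j hj => Finset.sum_congr rfl fun k hk => ?_
          rw [Nat.sub_add_cancel (Finset.mem_Icc.mp hk).1]
        rw [step1, step2, step3]
      have swap2 : (∑ i : ι, -(∑ j ∈ Icc 1 Nx, ∑ k ∈ Icc 1 Ny,
              z i^2 * ((c0 i j (k-1) + c0 i j k)/2)
                * (((φ0 j k + φ1 j k)/2 - (φ0 j (k-1) + φ1 j (k-1))/2)/dy)^2 * (dx * dy)))
          = -(∑ j ∈ Icc 1 Nx, ∑ k ∈ Icc 1 Ny,
            (∑ i, (z i)^2 * (c0 i j (k-1) + c0 i j k)/2)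
              * (((φ0 j k + φ1 j k)/2 - (φ0 j (k-1) + φ1 j (k-1))/2)/dy)^2 * (dx * dy)) := by
        rw [Finset.sum_neg_distrib, neg_inj]
        refine Finset.sum_comm.trans (Finset.sum_congr rfl fun j _ =>
          Finset.sum_comm.trans (Finset.sum_congr rfl fun k _ => ?_))
        simp only [Finset.sum_mul]
        exact Finset.sum_congr rfl fun i _ => by ring
      rw [swap1]
      rw [Finset.sum_congr rfl fun i _ => peri i]
      exact swap2
    rw [hS1, hS2, hS3]
    ring
  refine ⟨key, ?_⟩
  rw [key]
  have hd : (0:ℝ) ≤ dx * dy := le_of_lt (mul_pos hdx hdy)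
  have hA : (0:ℝ) ≤ ∑ j ∈ Icc 1 Nx, ∑ k ∈ Icc 1 Ny,
      (∑ i, z i * (c0 i j k + c1 i j k)/2)^2 * (dx * dy) :=
    Finset.sum_nonneg fun j _ => Finset.sum_nonneg fun k _ => mul_nonneg (sq_nonneg _) hd
  have hB : (0:ℝ) ≤ ∑ j ∈ Icc 1 Nx, ∑ k ∈ Icc 1 Ny,
      (∑ i, (z i)^2 * (c0 i (j-1) k + c0 i j k)/2)
        * (((φ0 j k + φ1 j k)/2 - (φ0 (j-1) k + φ1 (j-1) k)/2)/dx)^2 * (dx * dy) :=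
    Finset.sum_nonneg fun j _ => Finset.sum_nonneg fun k _ =>
      mul_nonneg (mul_nonneg (Finset.sum_nonneg fun i _ => div_nonneg
        (mul_nonneg (sq_nonneg _) (add_nonneg (hc0 i _ _) (hc0 i _ _))) (by norm_num))
        (sq_nonneg _)) hd
  have hC : (0:ℝ) ≤ ∑ j ∈ Icc 1 Nx, ∑ k ∈ Icc 1 Ny,
      (∑ i, (z i)^2 * (c0 i j (k-1) + c0 i j k)/2)
        * (((φ0 j k + φ1 j k)/2 - (φ0 j (k-1) + φ1 j (k-1))/2)/dy)^2 * (dx * dy) :=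
    Finset.sum_nonneg fun j _ => Finset.sum_nonneg fun k _ =>
      mul_nonneg (mul_nonneg (Finset.sum_nonneg fun i _ => div_nonneg
        (mul_nonneg (sq_nonneg _) (add_nonneg (hc0 i _ _) (hc0 i _ _))) (by norm_num))
        (sq_nonneg _)) hd
  linarith
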